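/- arXiv:1406.0947 — 2 statements merged into one kernel-verified Lean document; each statement's English description precedes it below -/
import Mathlib

section
/- Fix an integer m ≥ 2. Let S be a zigzag stack on [n], let C be its primary component, and for each C-interval ⟨u,v⟩ between consecutive vertices u < v of C set J = {u, u+1, …, v}, and, if C does not contain n and u is the largest vertex of C, also set J = {u, u+1, …, n}. Then S is an m-reduced zigzag stack if and only if for each such set J the following hold (degrees taken in S): (1) ld(i) + rd(i+m−1) ≤ 2 whenever both i and i+m−1 lie in J; (2) whenever i < j both lie in J with ld(i) > 0 and rd(j) > 0, then j − i ≥ m−1. -/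
open PowerSeries

namespace Paper

/-- The arc set of a diagram: a finite set of pairs `(i,j)`. -/
abbrev Arcs := Finset (ℕ × ℕ)

/-- A diagram on `[n] = {1,…,n}`: every arc `(i,j)` satisfies `1 ≤ i < j ≤ n`. -/
def IsDiagram (n : ℕ) (A : Arcs) : Prop :=
  ∀ p ∈ A, 1 ≤ p.1 ∧ p.1 < p.2 ∧ p.2 ≤ n

/-- Two arcs `p = (i₁,j₁)` and `q = (i₂,j₂)` cross if `i₁ < i₂ < j₁ < j₂`. -/
def Crossing (p q : ℕ × ℕ) : Prop :=
  p.1 < q.1 ∧ q.1 < p.2 ∧ p.2 < q.2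

/-- A stack on `[n]`: a diagram with no two crossing arcs. -/
def IsStack (n : ℕ) (A : Arcs) : Prop :=
  IsDiagram n A ∧ ∀ p ∈ A, ∀ q ∈ A, ¬ Crossing p q

/-- Left-degree of vertex `v`: number of arcs `(u,v)` with `u < v`. -/
def ld (A : Arcs) (v : ℕ) : ℕ := (A.filter fun p => p.2 = v).card

/-- Right-degree of vertex `v`: number of arcs `(v,w)` with `v < w`. -/
def rd (A : Arcs) (v : ℕ) : ℕ := (A.filter fun p => p.1 = v).card

/-- Degree of a vertex. -/
def deg (A : Arcs) (v : ℕ) : ℕ := ld A v + rd A v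

/-- A zigzag stack: a stack where every vertex has degree ≤ 2 and no vertex has both
positive left-degree and positive right-degree. -/
def IsZigzag (n : ℕ) (A : Arcs) : Prop :=
  IsStack n A ∧ (∀ v, deg A v ≤ 2) ∧ ∀ v, ¬ (1 ≤ ld A v ∧ 1 ≤ rd A v)

/-- Adjacency in the underlying graph of a diagram. -/
def adj (A : Arcs) (u v : ℕ) : Prop := (u, v) ∈ A ∨ (v, u) ∈ A

/-- `v` lies in the primary component (connected component of vertex 1). -/
def inPrimary (A : Arcs) (v : ℕ) : Prop := Relation.ReflTransGen (adj A) 1 v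

/-- The underlying graph on vertex set `[n]` is connected. -/
def ConnectedOn (n : ℕ) (A : Arcs) : Prop :=
  ∀ u v, 1 ≤ u → u ≤ n → 1 ≤ v → v ≤ n → Relation.ReflTransGen (adj A) u v

/-- Number of stacks on `[n]`. -/
noncomputable def stackCount (n : ℕ) : ℕ := Nat.card {A : Arcs // IsStack n A}

/-- Number of zigzag stacks on `[n]`. -/
noncomputable def zigzagCount (n : ℕ) : ℕ := Nat.card {A : Arcs // IsZigzag n A}

/-- Number of connected zigzag stacks on `[n]`. -/
noncomputable def connZigzagCount (n : ℕ) : ℕ :=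
  Nat.card {A : Arcs // IsZigzag n A ∧ ConnectedOn n A}

/-- The ordinary generating function of the numbers of zigzag stacks. -/
noncomputable def Zgf : PowerSeries ℚ := PowerSeries.mk fun n => (zigzagCount n : ℚ)

/-- The power series variable over ℚ. -/
noncomputable def Xq : PowerSeries ℚ := PowerSeries.X

/-- An `m`-reduced zigzag stack on `[n]`:
(1) `ld(i) + rd(i+m−1) ≤ 2` for `1 ≤ i ≤ n−m+1` (written additively);
(2) if `1 ≤ i < j ≤ n` with `ld(i) > 0` and `rd(j) > 0` then `j − i ≥ m−1`. -/
def MRed (m n : ℕ) (A : Arcs) : Prop :=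
  IsZigzag n A ∧
  (∀ i, 1 ≤ i → i + m ≤ n + 1 → ld A i + rd A (i + m - 1) ≤ 2) ∧
  (∀ i j, 1 ≤ i → i < j → j ≤ n → 0 < ld A i → 0 < rd A j → i + m ≤ j + 1)

/-- An `m`-regular linear stack on `[n]`: every arc has length ≥ m and every vertex has
degree ≤ 2. -/
def RegLinear (m n : ℕ) (A : Arcs) : Prop :=
  IsStack n A ∧ (∀ p ∈ A, p.1 + m ≤ p.2) ∧ ∀ v, deg A v ≤ 2

/-- Number of `m`-reduced zigzag stacks on `[n]`. -/
noncomputable def zm (m n : ℕ) : ℕ := Nat.card {A : Arcs // MRed m n A}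

/-- Number of `m`-regular linear stacks on `[n]`. -/
noncomputable def rmc (m n : ℕ) : ℕ := Nat.card {A : Arcs // RegLinear m n A}

/-- Generating function of `m`-reduced zigzag stacks. -/
noncomputable def Zm (m : ℕ) : PowerSeries ℚ := PowerSeries.mk fun n => (zm m n : ℚ)

/-- Generating function of `m`-regular linear stacks. -/
noncomputable def Rm (m : ℕ) : PowerSeries ℚ := PowerSeries.mk fun n => (rmc m n : ℚ)

/-- Extended left-degree function used to define boundary types. -/
def extLD (A : Arcs) (l a v : ℕ) : ℕ :=
  if v = 0 then a else if v = l + 1 then 0 else ld A v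

/-- Extended right-degree function used to define boundary types. -/
def extRD (A : Arcs) (l b v : ℕ) : ℕ :=
  if v = 0 then 0 else if v = l + 1 then b else rd A v

/-- An `m`-reduced zigzag stack on `[l]` of boundary type `(a,b)`. -/
def BoundaryType (m a b l : ℕ) (A : Arcs) : Prop :=
  MRed m l A ∧
  (∀ i, i + m ≤ l + 2 → extLD A l a i + extRD A l b (i + m - 1) ≤ 2) ∧
  (∀ i j, i < j → j ≤ l + 1 → 0 < extLD A l a i → 0 < extRD A l b j → i + m ≤ j + 1)

/-- Number of boundary-type-`(a,b)` structures on `[n]`. -/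
noncomputable def tc (m a b n : ℕ) : ℕ := Nat.card {A : Arcs // BoundaryType m a b n A}

/-- Generating functions `T_i(x)`; types T₁,…,T₆ correspond to `(a,b)` =
(0,0), (1,0), (1,1), (2,0), (2,1), (2,2). -/
noncomputable def Tgf (m a b : ℕ) : PowerSeries ℚ := PowerSeries.mk fun n => (tc m a b n : ℚ)

/-- Type G : `m`-reduced zigzag stack with `deg(1) ≤ 1`. -/
def TypeG (m n : ℕ) (A : Arcs) : Prop := MRed m n A ∧ deg A 1 ≤ 1

/-- Type H : `m`-reduced zigzag stack with `deg(1) ≤ 1` and `deg(n) ≤ 1`. -/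
def TypeH (m n : ℕ) (A : Arcs) : Prop := MRed m n A ∧ deg A 1 ≤ 1 ∧ deg A n ≤ 1

noncomputable def gcnt (m n : ℕ) : ℕ := Nat.card {A : Arcs // TypeG m n A}
noncomputable def hcnt (m n : ℕ) : ℕ := Nat.card {A : Arcs // TypeH m n A}

/-- Generating function `G(x)`. -/
noncomputable def Ggf (m : ℕ) : PowerSeries ℚ := PowerSeries.mk fun n => (gcnt m n : ℚ)

/-- Generating function `H(x)`. -/
noncomputable def Hgf (m : ℕ) : PowerSeries ℚ := PowerSeries.mk fun n => (hcnt m n : ℚ)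

/-- The reduction map θ_m: replace each arc `(i,j)` by `(i, j−m+1)`. -/
def theta (m : ℕ) (A : Arcs) : Arcs := A.image fun p => (p.1, p.2 - m + 1)

/-- Relabel a structure whose arcs lie in `{c+1, …}` down by `c`. -/
def shiftDown (c : ℕ) (A : Arcs) : Arcs := A.image fun p => (p.1 - c, p.2 - c)

/-- Conditions (1) and (2) of `m`-reducedness restricted to a set `J` of vertices. -/
def CondOn (m : ℕ) (A : Arcs) (J : Finset ℕ) : Prop :=
  (∀ i, i ∈ J → i + m - 1 ∈ J → ld A i + rd A (i + m - 1) ≤ 2) ∧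
  (∀ i j, i ∈ J → j ∈ J → i < j → 0 < ld A i → 0 < rd A j → i + m ≤ j + 1)
/-!
Necessity holds because every `J` lies in `[n]`. For sufficiency, take `i < j` in `[n]` with
`ld(i) > 0` and `rd(j) > 0`. If no vertex of `C` lies strictly between them, both lie in one `J`.
Otherwise such a vertex `w ≠ 1` carries an arc, so `ld(w) > 0` or `rd(w) > 0`, and condition (2)
for the shorter pair `(w, j)` or `(i, w)` (induction on `j - i`) already gives `j - i ≥ m - 1`.
For condition (1) only the case `ld(i) > 0 < rd(i+m-1)` is not settled by `deg ≤ 2`, and there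
the same argument shows that no vertex of `C` separates `i` from `i+m-1`.
-/

/-- The sets `J` of the theorem, for an arbitrary set `P` of marked vertices in place of the
primary component. -/
def CondOnGaps (m n : ℕ) (A : Arcs) (P : ℕ → Prop) : Prop :=
  (∀ u v : ℕ, P u → P v → u < v → v ≤ n → (∀ w, u < w → w < v → ¬ P w) →
      CondOn m A (Finset.Icc u v)) ∧
    (∀ u : ℕ, P u → u ≤ n → ¬ P n → (∀ w, P w → w ≤ n → w ≤ u) →
      CondOn m A (Finset.Icc u n))

lemma ld_pos_of_mem {A : Arcs} {p : ℕ × ℕ} (hp : p ∈ A) : 0 < ld A p.2 :=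
  Finset.card_pos.2 ⟨p, Finset.mem_filter.2 ⟨hp, rfl⟩⟩

lemma rd_pos_of_mem {A : Arcs} {p : ℕ × ℕ} (hp : p ∈ A) : 0 < rd A p.1 :=
  Finset.card_pos.2 ⟨p, Finset.mem_filter.2 ⟨hp, rfl⟩⟩

lemma inPrimary.one_le {n : ℕ} {A : Arcs} (hD : IsDiagram n A) {v : ℕ} (hv : inPrimary A v) :
    1 ≤ v := by
  induction hv with
  | refl => exact le_rfl
  | tail _ h _ =>
    rcases h with h | h
    · exact (hD _ h).1.trans (hD _ h).2.1.le
    · exact (hD _ h).1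

lemma inPrimary.ld_pos_or_rd_pos {A : Arcs} {w : ℕ} (hw : inPrimary A w) (hw1 : w ≠ 1) :
    0 < ld A w ∨ 0 < rd A w := by
  rcases hw.cases_tail with h | ⟨c, _, h | h⟩
  · exact absurd h hw1
  · exact Or.inl (ld_pos_of_mem h)
  · exact Or.inr (rd_pos_of_mem h)

lemma MRed.condOn_Icc {m n : ℕ} {A : Arcs} (h : MRed m n A) {a b : ℕ} (ha : 1 ≤ a)
    (hb : b ≤ n) : CondOn m A (Finset.Icc a b) := by
  refine ⟨fun i hi hi' => h.2.1 i ?_ ?_, fun i j hi hj hij => h.2.2 i j ?_ hij ?_⟩ <;>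
    simp only [Finset.mem_Icc] at * <;> omega

lemma CondOnGaps.exists_condOn {m n : ℕ} {A : Arcs} {P : ℕ → Prop} (h : CondOnGaps m n A P)
    (hP1 : P 1) {i j : ℕ} (hi : 1 ≤ i) (hij : i < j) (hjn : j ≤ n)
    (hsep : ∀ w, i < w → w < j → ¬ P w) :
    ∃ J : Finset ℕ, CondOn m A J ∧ i ∈ J ∧ j ∈ J := by
  classical
  set u := Nat.findGreatest P i
  have hu : P u := Nat.findGreatest_spec hi hP1
  have hui : u ≤ i := Nat.findGreatest_le i
  have hle_u : ∀ w, P w → w ≤ i → w ≤ u := fun w hw hwi => Nat.le_findGreatest hwi hw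
  by_cases hnext : ∃ v, P v ∧ i < v ∧ v ≤ n
  · set v := Nat.find hnext
    obtain ⟨hv, hiv, hvn⟩ : P v ∧ i < v ∧ v ≤ n := Nat.find_spec hnext
    have hjv : j ≤ v := by
      by_contra! hvj
      exact hsep v hiv hvj hv
    have hgap : ∀ w, u < w → w < v → ¬ P w := fun w huw hwv hw => by
      rcases le_or_gt w i with hwi | hiw
      · exact absurd (hle_u w hw hwi) huw.not_ge
      · exact Nat.find_min hnext hwv ⟨hw, hiw, by omega⟩
    refine ⟨Finset.Icc u v, h.1 u v hu hv (by omega) hvn hgap, ?_, ?_⟩ <;>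
      simp only [Finset.mem_Icc] <;> omega
  · push Not at hnext
    have hlast : ∀ w, P w → w ≤ n → w ≤ u := fun w hw hwn => by
      rcases le_or_gt w i with hwi | hiw
      · exact hle_u w hw hwi
      · exact absurd (hnext w hw hiw) hwn.not_gt
    have hn : ¬ P n := fun hn => by have := hlast n hn le_rfl; omega
    refine ⟨Finset.Icc u n, h.2 u hu (by omega) hn hlast, ?_, ?_⟩ <;>
      simp only [Finset.mem_Icc] <;> omega

lemma CondOnGaps.add_le_of_ld_pos_of_rd_pos {m n : ℕ} {A : Arcs} {P : ℕ → Prop}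
    (h : CondOnGaps m n A P) (hP1 : P 1) (hP : ∀ w, P w → 1 < w → 0 < ld A w ∨ 0 < rd A w)
    {i j : ℕ} (hi : 1 ≤ i) (hij : i < j) (hjn : j ≤ n) (hli : 0 < ld A i) (hrj : 0 < rd A j) :
    i + m ≤ j + 1 := by
  induction hd : j - i using Nat.strong_induction_on generalizing i j with
  | _ d ih =>
    by_cases hsep : ∃ w, i < w ∧ w < j ∧ P w
    · obtain ⟨w, hiw, hwj, hw⟩ := hsep
      rcases hP w hw (by omega) with hlw | hrw
      · have := ih (j - w) (by omega) (by omega) hwj hjn hlw hrj rfl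
        omega
      · have := ih (w - i) (by omega) hi hiw (by omega) hli hrw rfl
        omega
    · push Not at hsep
      obtain ⟨J, hJ, hiJ, hjJ⟩ := h.exists_condOn hP1 hi hij hjn hsep
      exact hJ.2 i j hiJ hjJ hij hli hrj

lemma CondOnGaps.ld_add_rd_le_two {m n : ℕ} {A : Arcs} {P : ℕ → Prop}
    (h : CondOnGaps m n A P) (hP1 : P 1) (hP : ∀ w, P w → 1 < w → 0 < ld A w ∨ 0 < rd A w)
    (hm : 2 ≤ m) (hdeg : ∀ v, deg A v ≤ 2) {i : ℕ} (hi : 1 ≤ i) (hin : i + m ≤ n + 1) :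
    ld A i + rd A (i + m - 1) ≤ 2 := by
  by_cases hpos : 0 < ld A i ∧ 0 < rd A (i + m - 1)
  · have hsep : ∀ w, i < w → w < i + m - 1 → ¬ P w := fun w hiw hwj hw => by
      rcases hP w hw (by omega) with hlw | hrw
      · have := h.add_le_of_ld_pos_of_rd_pos hP1 hP (by omega) hwj (by omega) hlw hpos.2
        omega
      · have := h.add_le_of_ld_pos_of_rd_pos hP1 hP hi hiw (by omega) hpos.1 hrw
        omega
    obtain ⟨J, hJ, hiJ, hjJ⟩ := h.exists_condOn hP1 hi (by omega) (by omega) hsep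
    exact hJ.1 i hiJ hjJ
  · have := hdeg i
    have := hdeg (i + m - 1)
    unfold deg at *
    omega

lemma MRed.condOnGaps_inPrimary {m n : ℕ} {A : Arcs} (h : MRed m n A) :
    CondOnGaps m n A (inPrimary A) :=
  ⟨fun _ _ hu _ _ hvn _ => h.condOn_Icc (hu.one_le h.1.1.1) hvn,
    fun _ hu _ _ _ => h.condOn_Icc (hu.one_le h.1.1.1) le_rfl⟩

lemma CondOnGaps.mRed {m n : ℕ} {A : Arcs} (h : CondOnGaps m n A (inPrimary A))
    (hm : 2 ≤ m) (hA : IsZigzag n A) : MRed m n A := by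
  have hP : ∀ w, inPrimary A w → 1 < w → 0 < ld A w ∨ 0 < rd A w :=
    fun w hw hw1 => hw.ld_pos_or_rd_pos hw1.ne'
  exact ⟨hA, fun i hi hin => h.ld_add_rd_le_two .refl hP hm hA.2.1 hi hin,
    fun i j hi hij hjn => h.add_le_of_ld_pos_of_rd_pos .refl hP hi hij hjn⟩

/-- a zigzag stack is `m`-reduced iff conditions (1) and (2) hold on every
set `J = {u,…,v}` for consecutive vertices `u < v` of the primary component, and on
`J = {u,…,n}` when the primary component does not contain `n` and `u` is its largest
vertex. -/
theorem mreduced_iff_conditions_on_intervals (m n : ℕ) (hm : 2 ≤ m) (A : Arcs)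
    (hA : IsZigzag n A) :
    MRed m n A ↔
      ((∀ u v : ℕ, inPrimary A u → inPrimary A v → u < v → v ≤ n →
          (∀ w, u < w → w < v → ¬ inPrimary A w) →
          CondOn m A (Finset.Icc u v)) ∧
       (∀ u : ℕ, inPrimary A u → u ≤ n → ¬ inPrimary A n →
          (∀ w, inPrimary A w → w ≤ n → w ≤ u) →
          CondOn m A (Finset.Icc u n))) :=
  ⟨MRed.condOnGaps_inPrimary, fun h => CondOnGaps.mRed h hm hA⟩
end Paper
end

section
/- Fix an integer m ≥ 2. The generating function G(x) of m-reduced zigzag stacks of type G satisfies, as formal power series, G(x) = 1 + x·Z_m(x) + x²·Z_m(x)·T₂(x)/(1 − x·T₄(x)). -/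
open PowerSeries

namespace Paper

/-!
Vertex `1` of a structure of type G is either isolated, and deleting it leaves an arbitrary
`m`-reduced zigzag stack (the term `x·Z_m`), or it carries a single arc `(1, j)`. Such a structure
is glued from the part `B` under the arc, whose last vertex is `j`, and the part `C` to the right
of `j`; the `m`-reducedness conditions only relate vertices through their degrees, and the
incoming arc at `j` shields the vertices left of `j` from the arcs starting right of it, so the
whole structure is `m`-reduced exactly when `B` is and `C` has boundary type `(ld j, 0)`.
If `ld j = 1`, then `B` is an arbitrary `m`-reduced zigzag stack on `2, …, j - 1`; if `ld j = 2`,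
the mirror image of `B` is again a structure whose vertex `1` carries a single arc. Writing `F`
for the generating function of the latter, `G = 1 + x·Z_m + F` and `F = x²·Z_m·T₂ + x·T₄·F`.
-/

theorem card_filter_image_eq {A : Arcs} {f : ℕ × ℕ → ℕ × ℕ} {P Q : ℕ × ℕ → Prop}
    [DecidablePred P] [DecidablePred Q] (hf : Set.InjOn f A) (hPQ : ∀ p ∈ A, P (f p) ↔ Q p) :
    ((A.image f).filter P).card = (A.filter Q).card := by
  rw [Finset.filter_image, Finset.card_image_of_injOn (hf.mono (Finset.filter_subset _ _))]
  exact congrArg _ (Finset.filter_congr hPQ)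

theorem ld_pos_of_mem_s14 {A : Arcs} {u v : ℕ} (h : (u, v) ∈ A) : 0 < ld A v :=
  Finset.card_pos.2 ⟨(u, v), Finset.mem_filter.2 ⟨h, rfl⟩⟩

theorem rd_pos_of_mem_s14 {A : Arcs} {u v : ℕ} (h : (u, v) ∈ A) : 0 < rd A u :=
  Finset.card_pos.2 ⟨(u, v), Finset.mem_filter.2 ⟨h, rfl⟩⟩

theorem ld_eq_zero {n v : ℕ} {A : Arcs} (hA : IsDiagram n A) (hv : v ≤ 1 ∨ n < v) :
    ld A v = 0 :=
  Finset.card_eq_zero.2 (Finset.filter_eq_empty_iff.2 fun p hp => by have := hA p hp; omega)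

theorem rd_eq_zero {n v : ℕ} {A : Arcs} (hA : IsDiagram n A) (hv : v = 0 ∨ n ≤ v) :
    rd A v = 0 :=
  Finset.card_eq_zero.2 (Finset.filter_eq_empty_iff.2 fun p hp => by have := hA p hp; omega)

theorem eq_of_rd_eq_one {A : Arcs} {u v w : ℕ} (h : rd A u = 1) (hv : (u, v) ∈ A)
    (hw : (u, w) ∈ A) : v = w := by
  have := Finset.card_le_one.1 h.le (u, v) (by simp [hv]) (u, w) (by simp [hw])
  simpa using this

theorem exists_arc_of_rd_eq_one {A : Arcs} {u : ℕ} (h : rd A u = 1) : ∃ w, (u, w) ∈ A := by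
  obtain ⟨p, hp⟩ := Finset.card_pos.1 (h ▸ zero_lt_one : 0 < rd A u)
  obtain ⟨hp, rfl⟩ := Finset.mem_filter.1 hp
  exact ⟨p.2, by simpa using hp⟩

theorem ld_union {A B : Arcs} (h : Disjoint A B) (v : ℕ) : ld (A ∪ B) v = ld A v + ld B v := by
  rw [ld, Finset.filter_union, Finset.card_union_of_disjoint (Finset.disjoint_filter_filter h)]
  rfl

theorem rd_union {A B : Arcs} (h : Disjoint A B) (v : ℕ) : rd (A ∪ B) v = rd A v + rd B v := by
  rw [rd, Finset.filter_union, Finset.card_union_of_disjoint (Finset.disjoint_filter_filter h)]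
  rfl

theorem ld_insert {A : Arcs} {p : ℕ × ℕ} (h : p ∉ A) (v : ℕ) :
    ld (insert p A) v = (if p.2 = v then 1 else 0) + ld A v := by
  rw [ld, Finset.filter_insert]
  split_ifs
  · rw [Finset.card_insert_of_notMem (by simp [h]), add_comm]; rfl
  · simp [ld]

theorem rd_insert {A : Arcs} {p : ℕ × ℕ} (h : p ∉ A) (v : ℕ) :
    rd (insert p A) v = (if p.1 = v then 1 else 0) + rd A v := by
  rw [rd, Finset.filter_insert]
  split_ifs
  · rw [Finset.card_insert_of_notMem (by simp [h]), add_comm]; rfl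
  · simp [rd]

def shiftUp (c : ℕ) (A : Arcs) : Arcs := A.image fun p => (p.1 + c, p.2 + c)

theorem mem_shiftUp {c : ℕ} {A : Arcs} {q : ℕ × ℕ} :
    q ∈ shiftUp c A ↔ c ≤ q.1 ∧ c ≤ q.2 ∧ (q.1 - c, q.2 - c) ∈ A := by
  constructor
  · rintro hq
    obtain ⟨p, hp, rfl⟩ := Finset.mem_image.1 hq
    simpa using hp
  · rintro ⟨h1, h2, hq⟩
    exact Finset.mem_image.2 ⟨_, hq, by ext <;> simp <;> omega⟩

theorem shiftUp_injective (c : ℕ) : Function.Injective (shiftUp c) :=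
  Finset.image_injective fun p q h => by
    simp only [Prod.mk.injEq, add_left_inj] at h
    exact Prod.ext h.1 h.2

theorem shiftUp_shiftDown {c : ℕ} {A : Arcs} (h : ∀ p ∈ A, c ≤ p.1 ∧ c ≤ p.2) :
    shiftUp c (shiftDown c A) = A := by
  rw [shiftUp, shiftDown, Finset.image_image]
  conv_rhs => rw [← Finset.image_id (s := A)]
  refine Finset.image_congr fun p hp => ?_
  have := h p hp
  ext <;> simp <;> omega

theorem shiftDown_shiftUp (c : ℕ) (B : Arcs) : shiftDown c (shiftUp c B) = B := by
  simp [shiftDown, shiftUp, Finset.image_image, Function.comp_def]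

theorem isDiagram_shiftUp {n : ℕ} {B : Arcs} (hB : IsDiagram n B) (c : ℕ) :
    IsDiagram (n + c) (shiftUp c B) := fun q hq => by
  obtain ⟨h1, h2, hq⟩ := mem_shiftUp.1 hq
  have := hB _ hq
  dsimp only at this
  omega

theorem isDiagram_shiftDown {n c : ℕ} {A : Arcs}
    (h : ∀ p ∈ A, c < p.1 ∧ p.1 < p.2 ∧ p.2 ≤ n + c) : IsDiagram n (shiftDown c A) :=
  fun q hq => by
    obtain ⟨p, hp, rfl⟩ := Finset.mem_image.1 hq
    have := h p hp
    dsimp only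
    omega

theorem ld_shiftUp {n : ℕ} {B : Arcs} (hB : IsDiagram n B) (c v : ℕ) :
    ld (shiftUp c B) v = ld B (v - c) :=
  card_filter_image_eq (fun p _ q _ h => by simpa [Prod.ext_iff] using h)
    fun p hp => by have := hB p hp; dsimp only; omega

theorem rd_shiftUp {n : ℕ} {B : Arcs} (hB : IsDiagram n B) (c v : ℕ) :
    rd (shiftUp c B) v = rd B (v - c) :=
  card_filter_image_eq (fun p _ q _ h => by simpa [Prod.ext_iff] using h)
    fun p hp => by have := hB p hp; dsimp only; omega

def reflect (l : ℕ) (A : Arcs) : Arcs := A.image fun p => (l + 1 - p.2, l + 1 - p.1)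

theorem isDiagram_reflect {l : ℕ} {A : Arcs} (hA : IsDiagram l A) :
    IsDiagram l (reflect l A) := fun q hq => by
  obtain ⟨p, hp, rfl⟩ := Finset.mem_image.1 hq
  have := hA p hp
  dsimp only
  omega

theorem reflect_reflect {l : ℕ} {A : Arcs} (hA : IsDiagram l A) :
    reflect l (reflect l A) = A := by
  rw [reflect, reflect, Finset.image_image]
  conv_rhs => rw [← Finset.image_id (s := A)]
  refine Finset.image_congr fun p hp => ?_
  have := hA p hp
  ext <;> simp <;> omega

theorem injOn_reflect {l : ℕ} {A : Arcs} (hA : IsDiagram l A) :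
    Set.InjOn (fun p : ℕ × ℕ => (l + 1 - p.2, l + 1 - p.1)) A := fun p hp q hq h => by
  have := hA p hp
  have := hA q hq
  simp only [Prod.mk.injEq] at h
  ext <;> omega

theorem ld_reflect {l : ℕ} {A : Arcs} (hA : IsDiagram l A) (v : ℕ) :
    ld (reflect l A) v = rd A (l + 1 - v) :=
  card_filter_image_eq (injOn_reflect hA) fun p hp => by have := hA p hp; dsimp only; omega

theorem rd_reflect {l : ℕ} {A : Arcs} (hA : IsDiagram l A) (v : ℕ) :
    rd (reflect l A) v = ld A (l + 1 - v) :=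
  card_filter_image_eq (injOn_reflect hA) fun p hp => by have := hA p hp; dsimp only; omega

/-- Conditions (1) and (2) of `m`-reducedness for arbitrary degree functions on a window
`[lo, hi]`; a boundary type imposes them on `[0, l + 1]` for the extended degrees. -/
def Reduced (m : ℕ) (L R : ℕ → ℕ) (lo hi : ℕ) : Prop :=
  (∀ i, lo ≤ i → i + m ≤ hi + 1 → L i + R (i + m - 1) ≤ 2) ∧
  (∀ i j, lo ≤ i → i < j → j ≤ hi → 0 < L i → 0 < R j → i + m ≤ j + 1)

theorem mred_iff {m n : ℕ} {A : Arcs} :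
    MRed m n A ↔ IsZigzag n A ∧ Reduced m (ld A) (rd A) 1 n :=
  Iff.rfl

theorem boundaryType_iff {m a b l : ℕ} {A : Arcs} :
    BoundaryType m a b l A ↔
      MRed m l A ∧ Reduced m (extLD A l a) (extRD A l b) 0 (l + 1) := by
  simp [BoundaryType, Reduced]

section Reduced

variable {m : ℕ} {L R L' R' : ℕ → ℕ} {lo hi : ℕ}

theorem Reduced.mono {lo' hi' : ℕ} (h : Reduced m L R lo hi) (hlo : lo ≤ lo') (hhi : hi' ≤ hi) :
    Reduced m L R lo' hi' :=
  ⟨fun i h1 h2 => h.1 i (by omega) (by omega),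
    fun i j h1 h2 h3 => h.2 i j (by omega) h2 (by omega)⟩

theorem Reduced.congr (hm : 1 ≤ m) (h : Reduced m L R lo hi)
    (hL : ∀ v, lo ≤ v → v ≤ hi → L v = L' v) (hR : ∀ v, lo ≤ v → v ≤ hi → R v = R' v) :
    Reduced m L' R' lo hi := by
  refine ⟨fun i h1 h2 => ?_, fun i j h1 h2 h3 hLi hRj => ?_⟩
  · rw [← hL i h1 (by omega), ← hR _ (by omega) (by omega)]
    exact h.1 i h1 h2
  · rw [← hL i h1 (by omega)] at hLi
    rw [← hR j (by omega) h3] at hRj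
    exact h.2 i j h1 h2 h3 hLi hRj

theorem reduced_congr (hm : 1 ≤ m) (hL : ∀ v, lo ≤ v → v ≤ hi → L v = L' v)
    (hR : ∀ v, lo ≤ v → v ≤ hi → R v = R' v) :
    Reduced m L R lo hi ↔ Reduced m L' R' lo hi :=
  ⟨fun h => h.congr hm hL hR,
    fun h => h.congr hm (fun v h1 h2 => (hL v h1 h2).symm) fun v h1 h2 => (hR v h1 h2).symm⟩

theorem reduced_shift_iff (hm : 1 ≤ m) (c : ℕ) :
    Reduced m L R (lo + c) (hi + c) ↔
      Reduced m (fun v => L (v + c)) (fun v => R (v + c)) lo hi := by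
  constructor
  · refine fun h => ⟨fun i h1 h2 => ?_, fun i j h1 h2 h3 hLi hRj => ?_⟩
    · have := h.1 (i + c) (by omega) (by omega)
      rwa [show i + c + m - 1 = i + m - 1 + c by omega] at this
    · have := h.2 (i + c) (j + c) (by omega) (by omega) (by omega) hLi hRj
      omega
  · refine fun h => ⟨fun i h1 h2 => ?_, fun i j h1 h2 h3 hLi hRj => ?_⟩
    · have := h.1 (i - c) (by omega) (by omega)
      dsimp only at this
      rwa [Nat.sub_add_cancel (by omega), show i - c + m - 1 + c = i + m - 1 by omega] at this
    · have := h.2 (i - c) (j - c) (by omega) (by omega) (by omega)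
        (by dsimp only; rwa [Nat.sub_add_cancel (by omega)])
        (by dsimp only; rwa [Nat.sub_add_cancel (by omega)])
      omega

theorem reduced_succ_lo_iff (hL : L lo = 0) (hR : ∀ v, R v ≤ 2) :
    Reduced m L R lo hi ↔ Reduced m L R (lo + 1) hi := by
  refine ⟨fun h => h.mono (by omega) le_rfl, fun h => ⟨fun i h1 h2 => ?_, ?_⟩⟩
  · rcases h1.eq_or_lt with rfl | h1
    · rw [hL, zero_add]; exact hR _
    · exact h.1 i h1 h2
  · intro i j h1 h2 h3 hLi hRj
    rcases h1.eq_or_lt with rfl | h1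
    · omega
    · exact h.2 i j h1 h2 h3 hLi hRj

theorem reduced_succ_hi_iff (hR : R (hi + 1) = 0) (hL : ∀ v, L v ≤ 2) :
    Reduced m L R lo (hi + 1) ↔ Reduced m L R lo hi := by
  refine ⟨fun h => h.mono le_rfl (by omega), fun h => ⟨fun i h1 h2 => ?_, ?_⟩⟩
  · rcases (show i + m ≤ hi + 1 ∨ i + m - 1 = hi + 1 by omega) with h2 | h2
    · exact h.1 i h1 h2
    · rw [h2, hR, add_zero]; exact hL i
  · intro i j h1 h2 h3 hLi hRj
    rcases h3.lt_or_eq with h3 | rfl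
    · exact h.2 i j h1 h2 (by omega) hLi hRj
    · omega

/-- A vertex `s` with positive left-degree separates the window: an arc starting right of `s`
must keep distance `m - 1` from `s`, hence from every vertex left of `s`. -/
theorem reduced_split_iff {s : ℕ} (hs : lo ≤ s) (hs' : s ≤ hi) (hLs : 0 < L s)
    (hL : ∀ v, L v ≤ 2) :
    Reduced m L R lo hi ↔ Reduced m L R lo s ∧ Reduced m L R s hi := by
  refine ⟨fun h => ⟨h.mono le_rfl hs', h.mono hs le_rfl⟩, fun ⟨hl, hr⟩ => ⟨?_, ?_⟩⟩
  · intro i h1 h2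
    by_cases h3 : i + m ≤ s + 1
    · exact hl.1 i h1 h3
    by_cases h4 : s ≤ i
    · exact hr.1 i h4 h2
    have : R (i + m - 1) = 0 := by
      by_contra hne
      have := hr.2 s (i + m - 1) le_rfl (by omega) (by omega) hLs (Nat.pos_of_ne_zero hne)
      omega
    rw [this, add_zero]
    exact hL i
  · intro i j h1 h2 h3 hLi hRj
    by_cases h4 : j ≤ s
    · exact hl.2 i j h1 h2 h4 hLi hRj
    by_cases h5 : s ≤ i
    · exact hr.2 i j h5 h2 h3 hLi hRj
    have := hr.2 s j le_rfl (by omega) h3 hLs hRj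
    omega

theorem Reduced.reflect (hm : 1 ≤ m) (h : Reduced m L R lo hi) :
    Reduced m (fun v => R (hi + lo - v)) (fun v => L (hi + lo - v)) lo hi := by
  refine ⟨fun i h1 h2 => ?_, fun i j h1 h2 h3 hLi hRj => ?_⟩
  · have := h.1 (hi + lo - (i + m - 1)) (by omega) (by omega)
    rw [show hi + lo - (i + m - 1) + m - 1 = hi + lo - i by omega] at this
    dsimp only
    omega
  · have := h.2 (hi + lo - j) (hi + lo - i) (by omega) (by omega) (by omega) hRj hLi
    omega

end Reduced

def NonCrossing (A : Arcs) : Prop := ∀ p ∈ A, ∀ q ∈ A, ¬ Crossing p q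

def ZigzagDegrees (x y : ℕ) : Prop := x + y ≤ 2 ∧ ¬(1 ≤ x ∧ 1 ≤ y)

theorem isZigzag_iff {n : ℕ} {A : Arcs} :
    IsZigzag n A ↔ IsDiagram n A ∧ NonCrossing A ∧ ∀ v, ZigzagDegrees (ld A v) (rd A v) := by
  simp only [IsZigzag, IsStack, NonCrossing, ZigzagDegrees, deg, forall_and, and_assoc]

theorem IsZigzag.ld_le {n : ℕ} {A : Arcs} (h : IsZigzag n A) (v : ℕ) : ld A v ≤ 2 := by
  have := h.2.1 v; unfold deg at this; omega

theorem IsZigzag.rd_le {n : ℕ} {A : Arcs} (h : IsZigzag n A) (v : ℕ) : rd A v ≤ 2 := by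
  have := h.2.1 v; unfold deg at this; omega

theorem isZigzag_congr {n n' : ℕ} {A : Arcs} (h : IsDiagram n A) (h' : IsDiagram n' A) :
    IsZigzag n A ↔ IsZigzag n' A := by
  simp only [isZigzag_iff, h, h', true_and]

theorem ZigzagDegrees.mono {x y x' y' : ℕ} (h : ZigzagDegrees x y) (hx : x' ≤ x) (hy : y' ≤ y) :
    ZigzagDegrees x' y' := by
  unfold ZigzagDegrees at *; omega

theorem forall_zigzagDegrees_add_iff {L R L' R' : ℕ → ℕ}
    (h : ∀ v, (L v = 0 ∧ R v = 0) ∨ (L' v = 0 ∧ R' v = 0)) :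
    (∀ v, ZigzagDegrees (L v + L' v) (R v + R' v)) ↔
      (∀ v, ZigzagDegrees (L v) (R v)) ∧ ∀ v, ZigzagDegrees (L' v) (R' v) := by
  refine ⟨fun hs => ⟨fun v => (hs v).mono (by omega) (by omega),
    fun v => (hs v).mono (by omega) (by omega)⟩, fun ⟨hl, hr⟩ v => ?_⟩
  rcases h v with ⟨h1, h2⟩ | ⟨h1, h2⟩
  · simpa [h1, h2] using hr v
  · simpa [h1, h2] using hl v

theorem nonCrossing_shiftUp_iff {c : ℕ} {B : Arcs} :
    NonCrossing (shiftUp c B) ↔ NonCrossing B := by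
  refine ⟨fun h p hp q hq hpq => ?_, fun h p hp q hq hpq => ?_⟩
  · refine h (p.1 + c, p.2 + c) (Finset.mem_image_of_mem _ hp)
      (q.1 + c, q.2 + c) (Finset.mem_image_of_mem _ hq) ?_
    unfold Crossing at *
    dsimp only
    omega
  · obtain ⟨hp1, hp2, hp⟩ := mem_shiftUp.1 hp
    obtain ⟨hq1, hq2, hq⟩ := mem_shiftUp.1 hq
    refine h _ hp _ hq ?_
    unfold Crossing at *
    dsimp only
    omega

theorem nonCrossing_union_iff {s : ℕ} {D E : Arcs} (hD : ∀ p ∈ D, p.2 ≤ s)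
    (hE : ∀ q ∈ E, s < q.1) : NonCrossing (D ∪ E) ↔ NonCrossing D ∧ NonCrossing E := by
  refine ⟨fun h => ⟨fun p hp q hq => h p (by simp [hp]) q (by simp [hq]),
    fun p hp q hq => h p (by simp [hp]) q (by simp [hq])⟩, fun ⟨hd, he⟩ => ?_⟩
  intro p hp q hq hpq
  unfold Crossing at hpq
  rcases Finset.mem_union.1 hp with hp | hp <;> rcases Finset.mem_union.1 hq with hq | hq
  · exact hd p hp q hq hpq
  · have := hD p hp; have := hE q hq; omega
  · have := hE p hp; have := hD q hq; omega
  · exact he p hp q hq hpq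

theorem nonCrossing_insert_iff {a b : ℕ} {E : Arcs} (hE : ∀ q ∈ E, a < q.1 ∧ q.2 ≤ b) :
    NonCrossing (insert (a, b) E) ↔ NonCrossing E := by
  refine ⟨fun h p hp q hq => h p (by simp [hp]) q (by simp [hq]), fun h => ?_⟩
  intro p hp q hq hpq
  unfold Crossing at hpq
  rcases Finset.mem_insert.1 hp with rfl | hp <;> rcases Finset.mem_insert.1 hq with rfl | hq
  · omega
  · have := hE q hq; dsimp only at hpq; omega
  · have := hE p hp; dsimp only at hpq; omega
  · exact h p hp q hq hpq

theorem isZigzag_shiftUp_iff {n : ℕ} {B : Arcs} (hB : IsDiagram n B) (c : ℕ) :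
    IsZigzag (n + c) (shiftUp c B) ↔ IsZigzag n B := by
  simp only [isZigzag_iff, nonCrossing_shiftUp_iff, ld_shiftUp hB, rd_shiftUp hB, hB,
    isDiagram_shiftUp hB, true_and]
  exact and_congr_right' ⟨fun h v => by simpa using h (v + c), fun h v => h _⟩

theorem lt_fst_of_mem_shiftUp {l c : ℕ} {C : Arcs} (hC : IsDiagram l C) {q : ℕ × ℕ}
    (hq : q ∈ shiftUp c C) : c < q.1 := by
  obtain ⟨h1, -, hq⟩ := mem_shiftUp.1 hq
  have := hC _ hq
  dsimp only at this
  omega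

theorem disjoint_shiftUp {p l : ℕ} {D C : Arcs} (hD : IsDiagram p D) (hC : IsDiagram l C) :
    Disjoint D (shiftUp p C) :=
  Finset.disjoint_left.2 fun q hq hq' => by
    have := hD q hq; have := lt_fst_of_mem_shiftUp hC hq'; omega

theorem ld_concat {p l : ℕ} {D C : Arcs} (hD : IsDiagram p D) (hC : IsDiagram l C) (v : ℕ) :
    ld (D ∪ shiftUp p C) v = ld D v + ld C (v - p) := by
  rw [ld_union (disjoint_shiftUp hD hC), ld_shiftUp hC]

theorem rd_concat {p l : ℕ} {D C : Arcs} (hD : IsDiagram p D) (hC : IsDiagram l C) (v : ℕ) :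
    rd (D ∪ shiftUp p C) v = rd D v + rd C (v - p) := by
  rw [rd_union (disjoint_shiftUp hD hC), rd_shiftUp hC]

theorem isDiagram_concat {p l : ℕ} {D C : Arcs} (hD : IsDiagram p D) (hC : IsDiagram l C) :
    IsDiagram (p + l) (D ∪ shiftUp p C) := by
  intro q hq
  rcases Finset.mem_union.1 hq with hq | hq
  · have := hD q hq; omega
  · have := isDiagram_shiftUp hC p q hq; omega

theorem isZigzag_concat_iff {p l : ℕ} {D C : Arcs} (hD : IsDiagram p D) (hC : IsDiagram l C) :
    IsZigzag (p + l) (D ∪ shiftUp p C) ↔ IsZigzag p D ∧ IsZigzag l C := by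
  have hsep : ∀ v, (ld D v = 0 ∧ rd D v = 0) ∨ (ld C (v - p) = 0 ∧ rd C (v - p) = 0) := by
    intro v
    rcases le_or_gt v p with h | h
    · exact Or.inr ⟨ld_eq_zero hC (by omega), rd_eq_zero hC (by omega)⟩
    · exact Or.inl ⟨ld_eq_zero hD (by omega), rd_eq_zero hD (by omega)⟩
  rw [isZigzag_iff, isZigzag_iff, ← isZigzag_shiftUp_iff hC p, add_comm l p, isZigzag_iff,
    nonCrossing_union_iff (s := p) (fun q hq => (hD q hq).2.2) fun q hq =>
      lt_fst_of_mem_shiftUp hC hq]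
  have hCp : IsDiagram (p + l) (shiftUp p C) := add_comm l p ▸ isDiagram_shiftUp hC p
  simp only [ld_concat hD hC, rd_concat hD hC, ld_shiftUp hC, rd_shiftUp hC,
    forall_zigzagDegrees_add_iff hsep, isDiagram_concat hD hC, hD, hCp, true_and]
  tauto

/-- `B`, a diagram on `[k + 1]`, moved to the vertices `2, …, k + 2` under the new arc
`(1, k + 2)`: the last vertex of `B` becomes the right end of the arc. -/
def arch (k : ℕ) (B : Arcs) : Arcs := insert (1, k + 2) (shiftUp 1 B)

theorem notMem_shiftUp_one {k : ℕ} {B : Arcs} (hB : IsDiagram (k + 1) B) :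
    (1, k + 2) ∉ shiftUp 1 B := fun h => by
  have := lt_fst_of_mem_shiftUp hB h; omega

theorem ld_arch {k : ℕ} {B : Arcs} (hB : IsDiagram (k + 1) B) (v : ℕ) :
    ld (arch k B) v = (if k + 2 = v then 1 else 0) + ld B (v - 1) := by
  rw [arch, ld_insert (notMem_shiftUp_one hB), ld_shiftUp hB]

theorem rd_arch {k : ℕ} {B : Arcs} (hB : IsDiagram (k + 1) B) (v : ℕ) :
    rd (arch k B) v = (if 1 = v then 1 else 0) + rd B (v - 1) := by
  rw [arch, rd_insert (notMem_shiftUp_one hB), rd_shiftUp hB]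

theorem isDiagram_arch {k : ℕ} {B : Arcs} (hB : IsDiagram (k + 1) B) :
    IsDiagram (k + 2) (arch k B) := by
  intro q hq
  rcases Finset.mem_insert.1 hq with rfl | hq
  · dsimp only; omega
  · exact isDiagram_shiftUp hB 1 q hq

theorem isZigzag_arch_iff {k : ℕ} {B : Arcs} (hB : IsDiagram (k + 1) B) :
    IsZigzag (k + 2) (arch k B) ↔ IsZigzag (k + 1) B ∧ ld B (k + 1) ≤ 1 := by
  have hnc : NonCrossing (arch k B) ↔ NonCrossing B := by
    rw [arch, nonCrossing_insert_iff, nonCrossing_shiftUp_iff]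
    intro q hq
    have := isDiagram_shiftUp hB 1 q hq
    have := lt_fst_of_mem_shiftUp hB hq
    omega
  have h0 : ld B 0 = 0 ∧ rd B 0 = 0 ∧ rd B (k + 1) = 0 :=
    ⟨ld_eq_zero hB (by omega), rd_eq_zero hB (by omega), rd_eq_zero hB (by omega)⟩
  rw [isZigzag_iff, isZigzag_iff, hnc]
  simp only [isDiagram_arch hB, hB, true_and, ld_arch hB, rd_arch hB, and_assoc]
  refine and_congr_right' ⟨fun h => ⟨fun v => ?_, ?_⟩, fun ⟨h, hk⟩ v => ?_⟩
  · exact (h (v + 1)).mono (by simp) (by simp)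
  · have := (h (k + 2)).1; simp at this; omega
  · by_cases h1 : v = 1
    · subst h1; simp [ZigzagDegrees, h0.1, h0.2.1]
    by_cases h2 : v = k + 2
    · subst h2; simp [ZigzagDegrees, h0.2.2]; omega
    · simpa [Ne.symm h1, Ne.symm h2] using h (v - 1)

theorem isZigzag_reflect {l : ℕ} {A : Arcs} (h : IsZigzag l A) : IsZigzag l (reflect l A) := by
  rw [isZigzag_iff] at h ⊢
  obtain ⟨hd, hnc, hv⟩ := h
  refine ⟨isDiagram_reflect hd, fun p hp q hq hpq => ?_, fun v => ?_⟩
  · obtain ⟨p, hp', rfl⟩ := Finset.mem_image.1 hp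
    obtain ⟨q, hq', rfl⟩ := Finset.mem_image.1 hq
    have := hd p hp'; have := hd q hq'
    refine hnc q hq' p hp' ?_
    unfold Crossing at *
    dsimp only at hpq
    omega
  · have := hv (l + 1 - v)
    rw [ld_reflect hd, rd_reflect hd]
    unfold ZigzagDegrees at *
    omega

theorem MRed.isDiagram {m n : ℕ} {A : Arcs} (h : MRed m n A) : IsDiagram n A := h.1.1.1

theorem isDiagram_succ_iff {k : ℕ} {B : Arcs} :
    IsDiagram (k + 1) B ∧ ld B (k + 1) = 0 ↔ IsDiagram k B := by
  refine ⟨fun ⟨hB, h0⟩ q hq => ?_, fun hB => ⟨fun q hq => ?_, ld_eq_zero hB (by omega)⟩⟩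
  · have := hB q hq
    have : q.2 ≠ k + 1 := fun h => by
      have := ld_pos_of_mem_s14 (show (q.1, k + 1) ∈ B from h ▸ hq); omega
    omega
  · have := hB q hq; omega

theorem mred_succ_iff {m k : ℕ} {B : Arcs} : MRed m (k + 1) B ∧ ld B (k + 1) = 0 ↔ MRed m k B := by
  constructor
  · rintro ⟨hB, h0⟩
    have hd := isDiagram_succ_iff.1 ⟨hB.isDiagram, h0⟩
    rw [mred_iff] at hB ⊢
    exact ⟨(isZigzag_congr hB.1.1.1 hd).1 hB.1,
      (reduced_succ_hi_iff (rd_eq_zero hd (by omega)) hB.1.ld_le).1 hB.2⟩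
  · intro hB
    have hd := isDiagram_succ_iff.2 hB.isDiagram
    refine ⟨?_, hd.2⟩
    rw [mred_iff] at hB ⊢
    exact ⟨(isZigzag_congr hB.1.1.1 hd.1).1 hB.1,
      (reduced_succ_hi_iff (rd_eq_zero hB.1.1.1 (by omega)) hB.1.ld_le).2 hB.2⟩

theorem mred_shiftUp_one_iff {m n : ℕ} (hm : 1 ≤ m) {B : Arcs} (hB : IsDiagram n B) :
    MRed m (n + 1) (shiftUp 1 B) ↔ MRed m n B := by
  rw [mred_iff, mred_iff, isZigzag_shiftUp_iff hB]
  refine and_congr_right fun hZ => ?_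
  rw [reduced_succ_lo_iff (by simp [ld_shiftUp hB, ld_eq_zero hB])
    (fun v => by rw [rd_shiftUp hB]; exact hZ.rd_le _), reduced_shift_iff hm]
  simp only [ld_shiftUp hB, rd_shiftUp hB, Nat.add_sub_cancel]

theorem exists_eq_shiftUp_one {m n : ℕ} (hm : 1 ≤ m) {A : Arcs} (hA : MRed m (n + 1) A)
    (h0 : rd A 1 = 0) : ∃ B, MRed m n B ∧ shiftUp 1 B = A := by
  have hpos : ∀ p ∈ A, 1 < p.1 ∧ p.1 < p.2 ∧ p.2 ≤ n + 1 := fun p hp => by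
    have := hA.isDiagram p hp
    have : p.1 ≠ 1 := fun h => by
      have := rd_pos_of_mem_s14 (show (1, p.2) ∈ A from h ▸ hp); omega
    omega
  have hA' : shiftUp 1 (shiftDown 1 A) = A :=
    shiftUp_shiftDown fun p hp => by have := hpos p hp; omega
  exact ⟨shiftDown 1 A, (mred_shiftUp_one_iff hm (isDiagram_shiftDown hpos)).1 (by rwa [hA']), hA'⟩

theorem rd_shiftUp_one {n : ℕ} {B : Arcs} (hB : IsDiagram n B) : rd (shiftUp 1 B) 1 = 0 := by
  rw [rd_shiftUp hB, rd_eq_zero hB (by omega)]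

theorem MRed.reflect {m l : ℕ} (hm : 1 ≤ m) {A : Arcs} (h : MRed m l A) :
    MRed m l (reflect l A) := by
  rw [mred_iff] at h ⊢
  refine ⟨isZigzag_reflect h.1, ?_⟩
  convert h.2.reflect hm using 1 <;> funext v
  · exact ld_reflect h.1.1.1 v
  · exact rd_reflect h.1.1.1 v

theorem reduced_arch_iff {m k : ℕ} (hm : 1 ≤ m) {B : Arcs} (hB : IsZigzag (k + 1) B)
    (hk : ld B (k + 1) ≤ 1) :
    Reduced m (ld (arch k B)) (rd (arch k B)) 1 (k + 2) ↔ Reduced m (ld B) (rd B) 1 (k + 1) := by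
  have hd := hB.1.1
  have hZ := (isZigzag_arch_iff hd).2 ⟨hB, hk⟩
  rw [reduced_succ_lo_iff (by simp [ld_arch hd, ld_eq_zero hd]) hZ.rd_le,
    show k + 2 = k + 1 + 1 from rfl,
    reduced_succ_hi_iff (rd_eq_zero (v := k + 2) (isDiagram_arch hd) (by omega)) hZ.ld_le,
    reduced_shift_iff hm, reduced_succ_hi_iff (rd_eq_zero (v := k + 1) hd (by omega)) hB.ld_le]
  refine reduced_congr hm (fun v _ hv => ?_) fun v hv _ => ?_
  · simp [ld_arch hd, show k + 2 ≠ v + 1 by omega]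
  · simp [rd_arch hd]; omega

theorem mred_arch_iff {m k : ℕ} (hm : 1 ≤ m) {B : Arcs} (hB : IsDiagram (k + 1) B) :
    MRed m (k + 2) (arch k B) ↔ MRed m (k + 1) B ∧ ld B (k + 1) ≤ 1 := by
  rw [mred_iff, mred_iff, isZigzag_arch_iff hB]
  constructor
  · rintro ⟨⟨hZ, hk⟩, hR⟩
    exact ⟨⟨hZ, (reduced_arch_iff hm hZ hk).1 hR⟩, hk⟩
  · rintro ⟨⟨hZ, hR⟩, hk⟩
    exact ⟨⟨hZ, hk⟩, (reduced_arch_iff hm hZ hk).2 hR⟩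

theorem Reduced.of_boundary {m l a b : ℕ} (hm : 1 ≤ m) {C : Arcs}
    (h : Reduced m (extLD C l a) (extRD C l b) 0 (l + 1)) : Reduced m (ld C) (rd C) 1 l :=
  (h.mono (by omega) (by omega)).congr hm
    (fun v h1 h2 => by rw [extLD, if_neg (by omega), if_neg (by omega)])
    fun v h1 h2 => by rw [extRD, if_neg (by omega), if_neg (by omega)]

theorem reduced_concat_iff {m p l : ℕ} (hm : 1 ≤ m) {D C : Arcs} (hD : IsDiagram p D)
    (hC : IsDiagram l C) (hZ : IsZigzag (p + l) (D ∪ shiftUp p C)) (hp : 0 < ld D p) :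
    Reduced m (ld (D ∪ shiftUp p C)) (rd (D ∪ shiftUp p C)) 1 (p + l) ↔
      Reduced m (ld D) (rd D) 1 p ∧ Reduced m (extLD C l (ld D p)) (extRD C l 0) 0 (l + 1) := by
  have hp1 : 1 ≤ p := by
    by_contra h
    rw [ld_eq_zero hD (by omega)] at hp
    exact lt_irrefl 0 hp
  have hshift := reduced_shift_iff (L := ld (D ∪ shiftUp p C)) (R := rd (D ∪ shiftUp p C))
    hm p (lo := 0) (hi := l + 1)
  rw [zero_add, show l + 1 + p = p + l + 1 by omega] at hshift
  rw [← reduced_succ_hi_iff (rd_eq_zero (v := p + l + 1) (isDiagram_concat hD hC) (by omega))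
      hZ.ld_le, reduced_split_iff hp1 (by omega) (by rw [ld_concat hD hC]; omega) hZ.ld_le,
    hshift]
  refine and_congr (reduced_congr hm (fun v _ hv => ?_) fun v _ hv => ?_)
    (reduced_congr hm (fun v _ hv => ?_) fun v _ hv => ?_)
  · rw [ld_concat hD hC, ld_eq_zero hC (by omega), add_zero]
  · rw [rd_concat hD hC, rd_eq_zero hC (by omega), add_zero]
  · rw [ld_concat hD hC, Nat.add_sub_cancel]
    unfold extLD
    split_ifs with h0 h1
    · rw [h0, zero_add, ld_eq_zero hC (by omega), add_zero]
    · rw [ld_eq_zero hD (by omega), ld_eq_zero hC (by omega)]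
    · rw [ld_eq_zero hD (by omega), zero_add]
  · rw [rd_concat hD hC, Nat.add_sub_cancel, rd_eq_zero hD (by omega), zero_add]
    unfold extRD
    split_ifs with h0 h1
    · rw [h0, rd_eq_zero hC (by omega)]
    · rw [rd_eq_zero hC (by omega)]
    · rfl

theorem mred_concat_iff {m p l : ℕ} (hm : 1 ≤ m) {D C : Arcs} (hD : IsDiagram p D)
    (hC : IsDiagram l C) (hp : 0 < ld D p) :
    MRed m (p + l) (D ∪ shiftUp p C) ↔ MRed m p D ∧ BoundaryType m (ld D p) 0 l C := by
  rw [mred_iff, boundaryType_iff, mred_iff, mred_iff]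
  constructor
  · rintro ⟨hZ, hR⟩
    obtain ⟨hZD, hZC⟩ := (isZigzag_concat_iff hD hC).1 hZ
    obtain ⟨hRD, hRC⟩ := (reduced_concat_iff hm hD hC hZ hp).1 hR
    exact ⟨⟨hZD, hRD⟩, ⟨hZC, hRC.of_boundary hm⟩, hRC⟩
  · rintro ⟨⟨hZD, hRD⟩, ⟨hZC, -⟩, hRC⟩
    have hZ := (isZigzag_concat_iff hD hC).2 ⟨hZD, hZC⟩
    exact ⟨hZ, (reduced_concat_iff hm hD hC hZ hp).2 ⟨hRD, hRC⟩⟩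

def glue (k : ℕ) (B C : Arcs) : Arcs := arch k B ∪ shiftUp (k + 2) C

def GluingData (m k l : ℕ) (B C : Arcs) : Prop :=
  MRed m (k + 1) B ∧ ld B (k + 1) ≤ 1 ∧ BoundaryType m (ld B (k + 1) + 1) 0 l C

theorem mred_glue_iff {m k l : ℕ} (hm : 1 ≤ m) {B C : Arcs} (hB : IsDiagram (k + 1) B)
    (hC : IsDiagram l C) : MRed m (k + 2 + l) (glue k B C) ↔ GluingData m k l B C := by
  have hlast : ld (arch k B) (k + 2) = ld B (k + 1) + 1 := by simp [ld_arch hB, add_comm]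
  rw [glue, mred_concat_iff hm (isDiagram_arch hB) hC (by omega), mred_arch_iff hm hB, hlast,
    GluingData, and_assoc]

def innerPart (k : ℕ) (A : Arcs) : Arcs := shiftDown 1 (A.filter fun p => 1 < p.1 ∧ p.2 ≤ k + 2)

def outerPart (k : ℕ) (A : Arcs) : Arcs := shiftDown (k + 2) (A.filter fun p => k + 2 < p.1)

theorem innerPart_glue {k l : ℕ} {B C : Arcs} (hB : IsDiagram (k + 1) B) (hC : IsDiagram l C) :
    innerPart k (glue k B C) = B := by
  rw [innerPart, glue, arch, Finset.insert_union, Finset.filter_insert, if_neg (by simp),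
    Finset.filter_union, Finset.filter_true_of_mem, Finset.filter_false_of_mem, Finset.union_empty,
    shiftDown_shiftUp]
  · intro q hq; have := isDiagram_shiftUp hC (k + 2) q hq; have := lt_fst_of_mem_shiftUp hC hq
    omega
  · intro q hq; have := isDiagram_shiftUp hB 1 q hq; have := lt_fst_of_mem_shiftUp hB hq; omega

theorem outerPart_glue {k l : ℕ} {B C : Arcs} (hB : IsDiagram (k + 1) B) (hC : IsDiagram l C) :
    outerPart k (glue k B C) = C := by
  rw [outerPart, glue, arch, Finset.insert_union, Finset.filter_insert, if_neg (by simp),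
    Finset.filter_union, Finset.filter_false_of_mem, Finset.filter_true_of_mem, Finset.empty_union,
    shiftDown_shiftUp]
  · intro q hq; exact lt_fst_of_mem_shiftUp hC hq
  · intro q hq; have := isDiagram_shiftUp hB 1 q hq; omega

theorem isDiagram_innerPart {k l : ℕ} {A : Arcs} (hA : IsDiagram (k + 2 + l) A) :
    IsDiagram (k + 1) (innerPart k A) :=
  isDiagram_shiftDown fun p hp => by
    obtain ⟨hp, h⟩ := Finset.mem_filter.1 hp; have := hA p hp; omega

theorem isDiagram_outerPart {k l : ℕ} {A : Arcs} (hA : IsDiagram (k + 2 + l) A) :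
    IsDiagram l (outerPart k A) :=
  isDiagram_shiftDown fun p hp => by
    obtain ⟨hp, h⟩ := Finset.mem_filter.1 hp; have := hA p hp; omega

/-- Every other arc lies under the arc `(1, k + 2)` or to its right: it cannot cross it, and it
cannot start at `k + 2`, where an arc already ends. -/
theorem arc_eq_or_under_or_right {N k : ℕ} {A : Arcs} (hA : IsZigzag N A) (h1 : rd A 1 = 1)
    (hk : (1, k + 2) ∈ A) {q : ℕ × ℕ} (hq : q ∈ A) :
    q = (1, k + 2) ∨ (1 < q.1 ∧ q.2 ≤ k + 2) ∨ k + 2 < q.1 := by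
  have := hA.1.1 q hq
  rcases (show q.1 = 1 ∨ 1 < q.1 by omega) with hq1 | hq1
  · left
    exact Prod.ext hq1 (eq_of_rd_eq_one h1 (show (1, q.2) ∈ A from hq1 ▸ hq) hk)
  right
  by_contra hcon
  rcases (show q.1 < k + 2 ∨ q.1 = k + 2 by omega) with hlt | heq
  · exact hA.1.2 _ hk q hq (by unfold Crossing; dsimp only; omega)
  · exact hA.2.2 (k + 2) ⟨ld_pos_of_mem_s14 hk, rd_pos_of_mem_s14 (show (k + 2, q.2) ∈ A from heq ▸ hq)⟩

theorem glue_innerPart_outerPart {N k : ℕ} {A : Arcs} (hA : IsZigzag N A) (h1 : rd A 1 = 1)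
    (hk : (1, k + 2) ∈ A) : glue k (innerPart k A) (outerPart k A) = A := by
  rw [glue, arch, innerPart, outerPart, shiftUp_shiftDown, shiftUp_shiftDown]
  · ext q
    simp only [Finset.mem_union, Finset.mem_insert, Finset.mem_filter]
    refine ⟨?_, fun hq => ?_⟩
    · rintro ((rfl | ⟨hq, -⟩) | ⟨hq, -⟩) <;> assumption
    · rcases arc_eq_or_under_or_right hA h1 hk hq with h | h | h <;> tauto
  all_goals
    intro p hp
    obtain ⟨hp, h⟩ := Finset.mem_filter.1 hp
    have := hA.1.1 p hp
    omega

theorem mem_glue_self {k : ℕ} {B C : Arcs} : (1, k + 2) ∈ glue k B C :=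
  Finset.mem_union_left _ (Finset.mem_insert_self _ _)

theorem eq_of_mem_glue {k l b : ℕ} {B C : Arcs} (hB : IsDiagram (k + 1) B) (hC : IsDiagram l C)
    (h : (1, b) ∈ glue k B C) : b = k + 2 := by
  rcases Finset.mem_union.1 h with h | h
  · rcases Finset.mem_insert.1 h with h | h
    · exact (Prod.ext_iff.1 h).2
    · have := lt_fst_of_mem_shiftUp hB h; omega
  · have := lt_fst_of_mem_shiftUp hC h; omega

theorem glue_inj {k k' l l' : ℕ} {B C B' C' : Arcs} (hB : IsDiagram (k + 1) B)
    (hC : IsDiagram l C) (hB' : IsDiagram (k' + 1) B') (hC' : IsDiagram l' C')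
    (h : glue k B C = glue k' B' C') : k = k' ∧ B = B' ∧ C = C' := by
  have hk : k = k' := Nat.add_right_cancel (eq_of_mem_glue hB' hC' (h ▸ mem_glue_self))
  subst hk
  exact ⟨rfl, by rw [← innerPart_glue hB hC, h, innerPart_glue hB' hC'],
    by rw [← outerPart_glue hB hC, h, outerPart_glue hB' hC']⟩

theorem rd_glue_one {k l : ℕ} {B C : Arcs} (hB : IsDiagram (k + 1) B) (hC : IsDiagram l C) :
    rd (glue k B C) 1 = 1 := by
  rw [glue, rd_concat (isDiagram_arch hB) hC, rd_arch hB, rd_eq_zero hB (by omega),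
    rd_eq_zero hC (by omega)]
  rfl

theorem exists_eq_glue {m n : ℕ} (hm : 1 ≤ m) {A : Arcs} (hA : MRed m (n + 2) A)
    (h1 : rd A 1 = 1) : ∃ k l, k + l = n ∧ ∃ B C, GluingData m k l B C ∧ glue k B C = A := by
  obtain ⟨j, hj⟩ := exists_arc_of_rd_eq_one h1
  have := hA.isDiagram _ hj
  dsimp only at this
  obtain ⟨k, rfl⟩ : ∃ k, j = k + 2 := ⟨j - 2, by omega⟩
  have hn : n + 2 = k + 2 + (n - k) := by omega
  rw [hn] at hA
  have hglue := glue_innerPart_outerPart hA.1 h1 hj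
  refine ⟨k, n - k, by omega, innerPart k A, outerPart k A, ?_, hglue⟩
  rw [← mred_glue_iff hm (isDiagram_innerPart hA.isDiagram) (isDiagram_outerPart hA.isDiagram),
    hglue]
  exact hA

theorem setOf_isDiagram_finite (n : ℕ) : {A : Arcs | IsDiagram n A}.Finite :=
  (Finset.finite_toSet (Finset.range (n + 1) ×ˢ Finset.range (n + 1)).powerset).subset
    fun A hA => Finset.mem_powerset.2 fun p hp => by
      have := hA p hp
      simp only [Finset.mem_product, Finset.mem_range]
      omega

instance finite_mred_and (m n : ℕ) (Q : Arcs → Prop) : Finite {A : Arcs // MRed m n A ∧ Q A} :=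
  ((setOf_isDiagram_finite n).subset fun _ hA => hA.1.isDiagram).to_subtype

instance finite_mred (m n : ℕ) : Finite {A : Arcs // MRed m n A} :=
  ((setOf_isDiagram_finite n).subset fun _ hA => MRed.isDiagram hA).to_subtype

instance finite_boundaryType (m a b l : ℕ) : Finite {A : Arcs // BoundaryType m a b l A} :=
  ((setOf_isDiagram_finite l).subset fun _ hA => hA.1.isDiagram).to_subtype

instance finite_gluingData (m k l : ℕ) :
    Finite {BC : Arcs × Arcs // GluingData m k l BC.1 BC.2} :=
  (((setOf_isDiagram_finite (k + 1)).prod (setOf_isDiagram_finite l)).subset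
    fun _ h => ⟨h.1.isDiagram, h.2.2.1.isDiagram⟩).to_subtype

noncomputable def fcnt (m n : ℕ) : ℕ := Nat.card {A : Arcs // MRed m n A ∧ rd A 1 = 1}

noncomputable def Fgf (m : ℕ) : PowerSeries ℚ := PowerSeries.mk fun n => (fcnt m n : ℚ)

theorem fcnt_eq_zero {m n : ℕ} (hn : n ≤ 1) : fcnt m n = 0 := by
  have : IsEmpty {A : Arcs // MRed m n A ∧ rd A 1 = 1} :=
    ⟨fun ⟨A, hA, h1⟩ => by rw [rd_eq_zero hA.isDiagram (by omega)] at h1; exact zero_ne_one h1⟩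
  exact Nat.card_of_isEmpty

theorem gcnt_zero (m : ℕ) : gcnt m 0 = 1 := by
  have hempty : ∀ A : Arcs, IsDiagram 0 A → A = ∅ := fun A hA =>
    Finset.eq_empty_of_forall_notMem fun p hp => by have := hA p hp; omega
  have : Unique {A : Arcs // TypeG m 0 A} := by
    refine ⟨⟨⟨∅, ?_⟩⟩, fun A => Subtype.ext (hempty A.1 A.2.1.isDiagram)⟩
    simp [TypeG, MRed, IsZigzag, IsStack, IsDiagram, deg, ld, rd]
  exact Nat.card_unique

theorem card_typeG_succ {m : ℕ} (hm : 1 ≤ m) (n : ℕ) :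
    gcnt m (n + 1) = zm m n + fcnt m (n + 1) := by
  have hdeg : ∀ A, MRed m (n + 1) A → deg A 1 = rd A 1 := fun A hA => by
    rw [deg, ld_eq_zero hA.isDiagram (by omega), zero_add]
  let f : {B : Arcs // MRed m n B} ⊕ {A : Arcs // MRed m (n + 1) A ∧ rd A 1 = 1} →
      {A : Arcs // TypeG m (n + 1) A} :=
    Sum.elim (fun B => ⟨shiftUp 1 B.1, (mred_shiftUp_one_iff hm B.2.isDiagram).2 B.2, by
        rw [hdeg _ ((mred_shiftUp_one_iff hm B.2.isDiagram).2 B.2), rd_shiftUp_one B.2.isDiagram]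
        exact zero_le_one⟩)
      fun A => ⟨A.1, A.2.1, (hdeg _ A.2.1).trans_le A.2.2.le⟩
  rw [gcnt, zm, fcnt, ← Nat.card_sum, Nat.card_eq_of_bijective f ⟨?_, ?_⟩]
  · rintro (B | A) (B' | A') h <;>
      replace h := congrArg Subtype.val h <;> simp only [f, Sum.elim_inl, Sum.elim_inr] at h
    · exact congrArg Sum.inl (Subtype.ext (shiftUp_injective 1 h))
    · have := A'.2.2
      rw [← h, rd_shiftUp_one B.2.isDiagram] at this
      exact absurd this zero_ne_one
    · have := A.2.2
      rw [h, rd_shiftUp_one B'.2.isDiagram] at this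
      exact absurd this zero_ne_one
    · exact congrArg Sum.inr (Subtype.ext h)
  · rintro ⟨A, hA, h1⟩
    rw [hdeg A hA] at h1
    rcases Nat.le_one_iff_eq_zero_or_eq_one.1 h1 with h0 | h1
    · obtain ⟨B, hB, rfl⟩ := exists_eq_shiftUp_one hm hA h0
      exact ⟨Sum.inl ⟨B, hB⟩, rfl⟩
    · exact ⟨Sum.inr ⟨A, hA, h1⟩, rfl⟩

theorem card_mred_ld_last_eq_one {m : ℕ} (hm : 1 ≤ m) (l : ℕ) :
    Nat.card {A : Arcs // MRed m l A ∧ ld A l = 1} = fcnt m l :=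
  Nat.card_congr
    { toFun := fun A => ⟨reflect l A.1, A.2.1.reflect hm, by
        rw [rd_reflect A.2.1.isDiagram, Nat.add_sub_cancel, A.2.2]⟩
      invFun := fun A => ⟨reflect l A.1, A.2.1.reflect hm, by
        rw [ld_reflect A.2.1.isDiagram, show l + 1 - l = 1 by omega, A.2.2]⟩
      left_inv := fun A => Subtype.ext (reflect_reflect A.2.1.isDiagram)
      right_inv := fun A => Subtype.ext (reflect_reflect A.2.1.isDiagram) }

theorem card_gluingData {m : ℕ} (hm : 1 ≤ m) (k l : ℕ) :
    Nat.card {BC : Arcs × Arcs // GluingData m k l BC.1 BC.2} =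
      zm m k * tc m 1 0 l + fcnt m (k + 1) * tc m 2 0 l := by
  let f : ({B : Arcs // MRed m k B} × {C : Arcs // BoundaryType m 1 0 l C}) ⊕
      ({B : Arcs // MRed m (k + 1) B ∧ ld B (k + 1) = 1} ×
        {C : Arcs // BoundaryType m 2 0 l C}) →
      {BC : Arcs × Arcs // GluingData m k l BC.1 BC.2} :=
    Sum.elim
      (fun BC => ⟨(BC.1.1, BC.2.1), (mred_succ_iff.2 BC.1.2).1, by
        rw [(mred_succ_iff.2 BC.1.2).2]; exact ⟨zero_le_one, BC.2.2⟩⟩)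
      fun BC => ⟨(BC.1.1, BC.2.1), BC.1.2.1, by rw [BC.1.2.2]; exact ⟨le_rfl, BC.2.2⟩⟩
  rw [zm, tc, tc, ← card_mred_ld_last_eq_one hm, ← Nat.card_prod, ← Nat.card_prod,
    ← Nat.card_sum, Nat.card_eq_of_bijective f ⟨?_, ?_⟩]
  · rintro (⟨B, C⟩ | ⟨B, C⟩) (⟨B', C'⟩ | ⟨B', C'⟩) h <;>
      replace h := congrArg Subtype.val h <;>
      simp only [f, Sum.elim_inl, Sum.elim_inr, Prod.mk.injEq] at h
    · rw [Subtype.ext h.1, Subtype.ext h.2]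
    · have := (mred_succ_iff.2 B.2).2; rw [h.1, B'.2.2] at this; exact absurd this one_ne_zero
    · have := (mred_succ_iff.2 B'.2).2; rw [← h.1, B.2.2] at this; exact absurd this one_ne_zero
    · rw [Subtype.ext h.1, Subtype.ext h.2]
  · rintro ⟨⟨B, C⟩, hB, hle, hC⟩
    rcases Nat.le_one_iff_eq_zero_or_eq_one.1 hle with h0 | h1
    · rw [h0] at hC
      exact ⟨Sum.inl (⟨B, mred_succ_iff.1 ⟨hB, h0⟩⟩, ⟨C, hC⟩), rfl⟩
    · rw [h1] at hC
      exact ⟨Sum.inr (⟨B, hB, h1⟩, ⟨C, hC⟩), rfl⟩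

open Finset.HasAntidiagonal in
theorem fcnt_add_two {m : ℕ} (hm : 1 ≤ m) (n : ℕ) :
    fcnt m (n + 2) = ∑ kl ∈ antidiagonal n,
      Nat.card {BC : Arcs × Arcs // GluingData m kl.1 kl.2 BC.1 BC.2} := by
  let f : (Σ kl : antidiagonal n,
      {BC : Arcs × Arcs // GluingData m kl.1.1 kl.1.2 BC.1 BC.2}) →
      {A : Arcs // MRed m (n + 2) A ∧ rd A 1 = 1} := fun x =>
    ⟨glue x.1.1.1 x.2.1.1 x.2.1.2, by
      obtain ⟨hB, -, hC⟩ := x.2.2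
      have hn : n + 2 = x.1.1.1 + 2 + x.1.1.2 := by have := mem_antidiagonal.1 x.1.2; omega
      rw [hn, mred_glue_iff hm hB.isDiagram hC.1.isDiagram]
      exact ⟨x.2.2, rd_glue_one hB.isDiagram hC.1.isDiagram⟩⟩
  rw [fcnt, ← Finset.sum_coe_sort, ← Nat.card_sigma, Nat.card_eq_of_bijective f ⟨?_, ?_⟩]
  · intro x y hf
    obtain ⟨hB, -, hC⟩ := x.2.2
    obtain ⟨hB', -, hC'⟩ := y.2.2
    obtain ⟨hk, hBB', hCC'⟩ := glue_inj hB.isDiagram hC.1.isDiagram hB'.isDiagram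
      hC'.1.isDiagram (congrArg Subtype.val hf)
    have hx := mem_antidiagonal.1 x.1.2
    have hy := mem_antidiagonal.1 y.1.2
    exact Sigma.subtype_ext (Subtype.ext (Prod.ext hk (by omega))) (Prod.ext hBB' hCC')
  · rintro ⟨A, hA, h1⟩
    obtain ⟨k, l, hkl, B, C, hBC, rfl⟩ := exists_eq_glue hm hA h1
    exact ⟨⟨⟨(k, l), mem_antidiagonal.2 hkl⟩, ⟨(B, C), hBC⟩⟩, rfl⟩

theorem Ggf_eq {m : ℕ} (hm : 1 ≤ m) : Ggf m = 1 + Xq * Zm m + Fgf m := by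
  ext (_ | n)
  · simp [Ggf, Fgf, Xq, gcnt_zero, fcnt_eq_zero]
  · simp [Ggf, Fgf, Zm, Xq, card_typeG_succ hm, PowerSeries.coeff_succ_X_mul]

theorem Fgf_eq {m : ℕ} (hm : 1 ≤ m) :
    Fgf m = Xq ^ 2 * Zm m * Tgf m 1 0 + Xq * Tgf m 2 0 * Fgf m := by
  rw [show Xq ^ 2 * Zm m * Tgf m 1 0 + Xq * Tgf m 2 0 * Fgf m =
    Xq * (Xq * (Zm m * Tgf m 1 0) + Fgf m * Tgf m 2 0) by ring]
  ext (_ | n)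
  · simp [Fgf, Xq, fcnt_eq_zero]
  rw [Xq, PowerSeries.coeff_succ_X_mul, map_add]
  rcases n with _ | n
  · simp [Fgf, fcnt_eq_zero, PowerSeries.coeff_mul]
  rw [PowerSeries.coeff_succ_X_mul, PowerSeries.coeff_mul, PowerSeries.coeff_mul,
    Finset.Nat.sum_antidiagonal_succ]
  simp [Fgf, Zm, Tgf, fcnt_eq_zero, fcnt_add_two hm, card_gluingData hm, Finset.sum_add_distrib]

/-- `G(x) = 1 + x·Z_m(x) + x²·Z_m(x)·T₂(x)/(1 − x·T₄(x))`. -/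
theorem G_equation (m : ℕ) (hm : 2 ≤ m) :
    Ggf m = 1 + Xq * Zm m + Xq ^ 2 * Zm m * Tgf m 1 0 * (1 - Xq * Tgf m 2 0)⁻¹ := by
  have hm1 : 1 ≤ m := by omega
  have hF : Fgf m = Xq ^ 2 * Zm m * Tgf m 1 0 * (1 - Xq * Tgf m 2 0)⁻¹ := by
    rw [PowerSeries.eq_mul_inv_iff_mul_eq (by simp [Xq])]
    linear_combination Fgf_eq hm1
  rw [Ggf_eq hm1, hF]
end Paper
end
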